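/- arXiv:1905.03498 — 2 statements merged into one kernel-verified Lean document; each statement's English description precedes it below -/
import Mathlib

section
/- Let ρ be a density operator (positive trace-class operator with trace 1) on a Hilbert space, with eigenvalue sequence (p_k) (Schatten decomposition), and suppose ρ = ∑_n λ_n ρ_n is any decomposition into rank-one projections ρ_n with weights λ_n ≥ 0, ∑ λ_n = 1. Then for every α > 1, the quantum Rényi entropy satisfies S_α(ρ) := (1-α)⁻¹ log Tr ρ^α ≤ (1-α)⁻¹ log ∑_n λ_n^α. -/
open scoped ComplexOrder

open Matrix


section helpers
lemma jensen_deficit {ι : Type*} [Fintype ι] {α : ℝ} (hα : 1 < α)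
    (p D : ι → ℝ) (hp : ∀ k, 0 ≤ p k) (hD : ∀ k, 0 ≤ D k)
    (hs : ∑ k, D k ≤ 1) :
    (∑ k, D k * p k) ^ α ≤ ∑ k, D k * p k ^ α := by
  have hRnn : 0 ≤ ∑ k, D k * p k ^ α :=
    Finset.sum_nonneg fun k _ => mul_nonneg (hD k) (Real.rpow_nonneg (hp k) _)
  set s := ∑ k, D k with hsdef
  have hs0 : 0 ≤ s := Finset.sum_nonneg fun k _ => hD k
  rcases eq_or_lt_of_le hs0 with h0 | hpos
  · have hz : ∀ k ∈ Finset.univ (α := ι), D k = 0 :=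
      (Finset.sum_eq_zero_iff_of_nonneg (fun k _ => hD k)).mp h0.symm
    rw [Finset.sum_eq_zero (fun k hk => by rw [hz k hk, zero_mul]),
      Real.zero_rpow (by linarith)]
    exact hRnn
  · have key := Real.rpow_arith_mean_le_arith_mean_rpow Finset.univ
      (fun k => D k / s) p (fun k _ => div_nonneg (hD k) hs0)
      (by rw [← Finset.sum_div, ← hsdef, div_self (ne_of_gt hpos)])
      (fun k _ => hp k) (le_of_lt hα)
    have h1 : ∑ k, (D k / s) * p k = (∑ k, D k * p k) / s := by
      rw [Finset.sum_div]; exact Finset.sum_congr rfl fun k _ => by ring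
    have h2 : ∑ k, (D k / s) * p k ^ α = (∑ k, D k * p k ^ α) / s := by
      rw [Finset.sum_div]; exact Finset.sum_congr rfl fun k _ => by ring
    rw [h1, h2, Real.div_rpow (Finset.sum_nonneg fun k _ => mul_nonneg (hD k) (hp k)) hs0,
      div_le_div_iff₀ (Real.rpow_pos_of_pos hpos α) hpos] at key
    have hsa : s ^ α ≤ s ^ (1:ℝ) :=
      Real.rpow_le_rpow_of_exponent_ge hpos hs (le_of_lt hα)
    rw [Real.rpow_one] at hsa
    calc (∑ k, D k * p k) ^ α = ((∑ k, D k * p k) ^ α * s) / s := by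
          field_simp
      _ ≤ ((∑ k, D k * p k ^ α) * s ^ α) / s := by
          apply div_le_div_of_nonneg_right key hs0 |>.trans_eq rfl
      _ ≤ ((∑ k, D k * p k ^ α) * s) / s := by
          apply div_le_div_of_nonneg_right _ hs0
          exact mul_le_mul_of_nonneg_left hsa hRnn
      _ = ∑ k, D k * p k ^ α := by field_simp

lemma dot_vecMulVec {d : ℕ} (u a b x : Fin d → ℂ) :
    u ⬝ᵥ ((vecMulVec a b) *ᵥ x) = (u ⬝ᵥ a) * (b ⬝ᵥ x) := by
  simp only [dotProduct, mulVec, vecMulVec_apply, Finset.sum_mul, Finset.mul_sum]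
  rw [Finset.sum_comm]
  apply Finset.sum_congr rfl; intro j _
  apply Finset.sum_congr rfl; intro i _
  ring
lemma conj_vecMulVec {d : ℕ} (A : Matrix (Fin d) (Fin d) ℂ) (u v : Fin d → ℂ)
    (B : Matrix (Fin d) (Fin d) ℂ) :
    A * vecMulVec u v * B = vecMulVec (A *ᵥ u) (v ᵥ* B) := by
  ext i j
  simp only [mul_apply, vecMulVec_apply, mulVec, vecMul, dotProduct,
    Finset.sum_mul, Finset.mul_sum]
  apply Finset.sum_congr rfl; intro a _
  apply Finset.sum_congr rfl; intro b _
  ring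
end helpers


lemma rank_one_proj_exists {d : ℕ} (σ : Matrix (Fin d) (Fin d) ℂ)
    (h1 : σ.IsHermitian) (h2 : σ ^ 2 = σ) (h3 : σ.rank = 1) :
    ∃ ψ : Fin d → ℂ, σ = vecMulVec ψ (star ψ) ∧ star ψ ⬝ᵥ ψ = 1 := by
  set μ := h1.eigenvalues with hμ
  set V : Matrix (Fin d) (Fin d) ℂ := (IsHermitian.eigenvectorUnitary h1 : Matrix (Fin d) (Fin d) ℂ) with hV
  have hVV : V * star V = 1 := (Matrix.mem_unitaryGroup_iff).mp (IsHermitian.eigenvectorUnitary h1).2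
  have hVV' : star V * V = 1 := (Matrix.mem_unitaryGroup_iff').mp (IsHermitian.eigenvectorUnitary h1).2
  set D : Matrix (Fin d) (Fin d) ℂ := diagonal (fun k => (μ k : ℂ)) with hDdef
  have hspec : σ = V * D * star V := by
    have := h1.spectral_theorem
    simp only [Unitary.conjStarAlgAut_apply, Unitary.coe_star] at this
    exact this
  have hD : D * D = D := by
    have hσσ : σ * σ = σ := by rw [← pow_two]; exact h2
    rw [hspec] at hσσ
    have expand : V * D * star V * (V * D * star V) = V * (D * D) * star V := by
      rw [show V * D * star V * (V * D * star V) = V * D * (star V * V) * D * star V by noncomm_ring,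
        hVV']; noncomm_ring
    rw [expand] at hσσ
    calc D * D = (star V * V) * (D * D) * (star V * V) := by rw [hVV']; noncomm_ring
      _ = star V * (V * (D * D) * star V) * V := by noncomm_ring
      _ = star V * (V * D * star V) * V := by rw [hσσ]
      _ = (star V * V) * D * (star V * V) := by noncomm_ring
      _ = D := by rw [hVV']; noncomm_ring
  have h01 : ∀ k, μ k = 0 ∨ μ k = 1 := by
    intro k
    have hk := congrArg (fun M => M k k) hD
    simp only [hDdef, diagonal_mul_diagonal, diagonal_apply_eq] at hk
    have hk' : μ k * μ k = μ k := by exact_mod_cast hk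
    rcases eq_or_ne (μ k) 0 with h | h
    · exact Or.inl h
    · exact Or.inr (mul_left_cancel₀ h (by rw [mul_one]; exact hk'))
  have hcard : Fintype.card {i // μ i ≠ 0} = 1 :=
    h1.rank_eq_card_non_zero_eigs.symm.trans h3
  obtain ⟨⟨j₀, hj₀⟩, huniq⟩ := Fintype.card_eq_one_iff.mp hcard
  have hμj₀ : μ j₀ = 1 := (h01 j₀).resolve_left hj₀
  have hzero : ∀ k, k ≠ j₀ → μ k = 0 := by
    intro k hk
    by_contra h
    exact hk (congrArg Subtype.val (huniq ⟨k, h⟩))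
  refine ⟨fun i => V i j₀, ?_, ?_⟩
  · ext i j
    rw [hspec]
    simp only [vecMulVec_apply, Pi.star_apply, RCLike.star_def, mul_apply, star_apply,
      Matrix.star_eq_conjTranspose, conjTranspose_apply]
    have inner : ∀ x, (∑ j', V i j' * D j' x) = V i x * (μ x : ℂ) := by
      intro x
      simp [hDdef, Matrix.diagonal_apply, mul_ite, mul_zero]
    calc ∑ x, (∑ j', V i j' * D j' x) * (starRingEnd ℂ) (V j x)
        = ∑ x, V i x * (μ x : ℂ) * (starRingEnd ℂ) (V j x) := by
          exact Finset.sum_congr rfl fun x _ => by rw [inner]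
      _ = V i j₀ * (starRingEnd ℂ) (V j j₀) := by
          rw [Finset.sum_eq_single j₀]
          · rw [hμj₀]; push_cast; ring
          · intro x _ hx
            rw [hzero x hx]; push_cast; ring
          · intro h; exact absurd (Finset.mem_univ j₀) h
  · have := congrArg (fun M => M j₀ j₀) hVV'
    simp only [mul_apply, Matrix.one_apply_eq, star_apply, Matrix.star_eq_conjTranspose,
      conjTranspose_apply] at this
    rw [dotProduct]
    simpa using this


/-- If `ρ` is a density operator with eigenvalue sequence
`hρ.eigenvalues` and `ρ = ∑' n, l n • σ n` is any decomposition into rank-one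
orthogonal projections `σ n` with weights `l n ≥ 0`, `∑ l n = 1`, then for every
`α > 1` the quantum Rényi entropy `S_α(ρ) = (1-α)⁻¹ log Tr ρ^α
= (1-α)⁻¹ log ∑ eigenvalues^α` is at most `(1-α)⁻¹ log ∑ l n ^ α`. -/
theorem quantum_renyi_le_decomposition {d : ℕ}
    (ρ : Matrix (Fin d) (Fin d) ℂ) (hρ : ρ.IsHermitian) (hpsd : ρ.PosSemidef)
    (htr : ρ.trace = 1)
    (l : ℕ → ℝ) (σ : ℕ → Matrix (Fin d) (Fin d) ℂ)
    (hl0 : ∀ n, 0 ≤ l n) (hls : ∑' n, l n = 1)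
    (hσ : ∀ n, (σ n).IsHermitian ∧ (σ n) ^ 2 = σ n ∧ (σ n).rank = 1)
    (hdec : ∑' n, l n • σ n = ρ)
    (α : ℝ) (hα : 1 < α) :
    (1 - α)⁻¹ * Real.log (∑ i, hρ.eigenvalues i ^ α)
      ≤ (1 - α)⁻¹ * Real.log (∑' n, l n ^ α) := by
  classical
  set p : Fin d → ℝ := hρ.eigenvalues with hpdef
  have hp0 : ∀ k, 0 ≤ p k := fun k => hpsd.eigenvalues_nonneg k
  have hρne : ρ ≠ 0 := fun h => by simp [h, Matrix.trace] at htr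
  have hSum : Summable (fun n => l n • σ n) := by
    by_contra h
    rw [tsum_eq_zero_of_not_summable h] at hdec
    exact hρne hdec.symm
  have hsumρ : HasSum (fun n => l n • σ n) ρ := hdec ▸ hSum.hasSum
  set U : Matrix (Fin d) (Fin d) ℂ := (IsHermitian.eigenvectorUnitary hρ : Matrix (Fin d) (Fin d) ℂ) with hUdef
  have hUU : U * star U = 1 := (Matrix.mem_unitaryGroup_iff).mp (IsHermitian.eigenvectorUnitary hρ).2
  have hdiagρ : star U * ρ * U = diagonal (fun k => (p k : ℂ)) := by
    have := Matrix.IsHermitian.conjStarAlgAut_star_eigenvectorUnitary hρ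
    simp only [Unitary.conjStarAlgAut_apply, Unitary.coe_star, star_star] at this
    exact this
  have hex : ∀ n, ∃ ψ : Fin d → ℂ, σ n = vecMulVec ψ (star ψ) ∧ star ψ ⬝ᵥ ψ = 1 :=
    fun n => rank_one_proj_exists (σ n) (hσ n).1 (hσ n).2.1 (hσ n).2.2
  choose ψ hψ hψ1 using hex
  set w : ℕ → Fin d → ℂ := fun n => (star U) *ᵥ ψ n with hwdef
  have hw2 : ∀ n, star (w n) = star (ψ n) ᵥ* U := by
    intro n
    rw [hwdef, star_mulVec]
    congr 1
    simp [Matrix.star_eq_conjTranspose]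
  have hσ' : ∀ n, star U * σ n * U = vecMulVec (w n) (star (w n)) := by
    intro n
    rw [hψ n, conj_vecMulVec, hw2 n]
  have hwnorm : ∀ n, ∑ k, Complex.normSq (w n k) = 1 := by
    intro n
    have h1 : star (w n) ⬝ᵥ w n = 1 := by
      rw [hw2 n, hwdef, dotProduct_mulVec, vecMul_vecMul, hUU, vecMul_one, hψ1 n]
    have h2 : ((∑ k, Complex.normSq (w n k) : ℝ) : ℂ) = 1 := by
      rw [← h1]
      simp only [dotProduct, Pi.star_apply, RCLike.star_def]
      push_cast
      apply Finset.sum_congr rfl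
      intro k _
      rw [Complex.normSq_eq_conj_mul_self]
    exact_mod_cast h2
  -- conjugated decomposition
  have hgcont : Continuous (fun M : Matrix (Fin d) (Fin d) ℂ => star U * M * U) :=
    (continuous_const.matrix_mul continuous_id).matrix_mul continuous_const
  have hsum' : HasSum (fun n => star U * (l n • σ n) * U) (diagonal fun k => (p k : ℂ)) := by
    have h := hsumρ.map (AddMonoidHom.mk' (fun M : Matrix (Fin d) (Fin d) ℂ => star U * M * U)
      (fun a b => by noncomm_ring)) hgcont
    simp only [AddMonoidHom.mk'_apply, Function.comp_def] at h
    rwa [hdiagρ] at h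
  -- quadratic form evaluation
  have hF2 : ∀ x : Fin d → ℂ,
      HasSum (fun n => l n * Complex.normSq (star x ⬝ᵥ w n))
        (∑ k, p k * Complex.normSq (x k)) := by
    intro x
    have φcont : Continuous (fun M : Matrix (Fin d) (Fin d) ℂ =>
        Complex.re (star x ⬝ᵥ M *ᵥ x)) :=
      Complex.continuous_re.comp
        (continuous_const.dotProduct (continuous_id.matrix_mulVec continuous_const))
    have h := hsum'.map (AddMonoidHom.mk' (fun M : Matrix (Fin d) (Fin d) ℂ =>
        Complex.re (star x ⬝ᵥ M *ᵥ x))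
      (fun a b => by simp [Matrix.add_mulVec, dotProduct_add])) φcont
    simp only [AddMonoidHom.mk'_apply, Function.comp_def] at h
    have hterm : ∀ n, Complex.re (star x ⬝ᵥ (star U * (l n • σ n) * U) *ᵥ x)
        = l n * Complex.normSq (star x ⬝ᵥ w n) := by
      intro n
      have e1 : star U * (l n • σ n) * U = l n • (star U * σ n * U) := by
        rw [Matrix.mul_smul, Matrix.smul_mul]
      rw [e1, hσ' n, smul_mulVec, dotProduct_smul]
      rw [dot_vecMulVec]
      have e2 : star (w n) ⬝ᵥ x = star (star x ⬝ᵥ w n) := by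
        rw [star_dotProduct]
      rw [e2, RCLike.star_def, Complex.mul_conj]
      simp [Complex.smul_re]
    have hval : Complex.re (star x ⬝ᵥ (diagonal fun k => (p k : ℂ)) *ᵥ x)
        = ∑ k, p k * Complex.normSq (x k) := by
      have : star x ⬝ᵥ (diagonal fun k => (p k : ℂ)) *ᵥ x
          = ∑ k, (p k : ℂ) * (Complex.normSq (x k) : ℂ) := by
        simp only [dotProduct, mulVec_diagonal, Pi.star_apply, RCLike.star_def]
        apply Finset.sum_congr rfl
        intro k _
        rw [show (starRingEnd ℂ) (x k) * ((p k : ℂ) * x k)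
            = (p k : ℂ) * ((starRingEnd ℂ) (x k) * x k) from by ring,
          ← Complex.normSq_eq_conj_mul_self]
      rw [this]
      push_cast
      simp
    simp only [hterm] at h
    rwa [hval] at h
  set t : ℕ → Fin d → ℝ := fun n k => l n * Complex.normSq (w n k) with htdef
  have ht0 : ∀ n k, 0 ≤ t n k := fun n k => mul_nonneg (hl0 n) (Complex.normSq_nonneg _)
  have hcol : ∀ k, HasSum (fun n => t n k) (p k) := by
    intro k
    have h := hF2 (Pi.single k 1 : Fin d → ℂ)
    have hst : star (Pi.single k (1:ℂ)) = (Pi.single k 1 : Fin d → ℂ) := by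
      funext i
      by_cases hik : i = k <;> simp [Pi.single_apply, hik]
    rw [hst] at h
    simp only [single_dotProduct, one_mul] at h
    have hrhs : ∑ j, p j * Complex.normSq ((Pi.single k 1 : Fin d → ℂ) j) = p k := by
      rw [Finset.sum_eq_single k]
      · simp
      · intro j _ hj
        simp [Pi.single_apply, hj]
      · intro hk
        exact absurd (Finset.mem_univ k) hk
    rwa [hrhs] at h
  have htle : ∀ n k, t n k ≤ p k := fun n k => le_hasSum (hcol k) n (fun m _ => ht0 m k)
  have htzero : ∀ n k, p k = 0 → t n k = 0 := fun n k h => le_antisymm (h ▸ htle n k) (ht0 n k)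
  set S : ℕ → ℝ := fun n => ∑ k, if p k = 0 then 0 else Complex.normSq (w n k) / p k with hSdef
  have hS0 : ∀ n, 0 ≤ S n := by
    intro n
    apply Finset.sum_nonneg
    intro k _
    by_cases hk : p k = 0
    · simp [hk]
    · have hkpos : 0 < p k := lt_of_le_of_ne (hp0 k) (Ne.symm hk)
      simp only [hk, if_false]
      exact div_nonneg (Complex.normSq_nonneg _) hkpos.le
  have hrow : ∀ n, l n * S n ≤ 1 := by
    intro n
    set v : Fin d → ℂ := fun k => if p k = 0 then 0 else w n k / (p k : ℂ) with hvdef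
    have hdot : star v ⬝ᵥ w n = (S n : ℂ) := by
      rw [dotProduct, hSdef]
      push_cast
      apply Finset.sum_congr rfl
      intro k _
      by_cases hk : p k = 0
      · simp [hvdef, hk]
      · simp only [hvdef, hk, if_false, Pi.star_apply, RCLike.star_def, map_div₀,
          Complex.conj_ofReal]
        rw [div_mul_eq_mul_div, ← Complex.normSq_eq_conj_mul_self]
        norm_cast
    have hrhs : ∑ k, p k * Complex.normSq (v k) = S n := by
      rw [hSdef]
      apply Finset.sum_congr rfl
      intro k _
      by_cases hk : p k = 0
      · simp [hvdef, hk]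
      · have hkpos : 0 < p k := lt_of_le_of_ne (hp0 k) (Ne.symm hk)
        simp only [hvdef, hk, if_false]
        rw [Complex.normSq_div, Complex.normSq_ofReal]
        field_simp
    have hb := le_hasSum (hrhs ▸ hF2 v) n (fun m _ => mul_nonneg (hl0 m) (Complex.normSq_nonneg _))
    rw [hdot, Complex.normSq_ofReal] at hb
    rcases (hS0 n).eq_or_lt with h | h
    · rw [← h, mul_zero]; norm_num
    · nlinarith [hb, h]
  set D : ℕ → Fin d → ℝ := fun n k => if p k = 0 then 0 else t n k / p k with hDdef
  have hD0 : ∀ n k, 0 ≤ D n k := by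
    intro n k
    by_cases hk : p k = 0
    · simp [hDdef, hk]
    · have hkpos : 0 < p k := lt_of_le_of_ne (hp0 k) (Ne.symm hk)
      simp only [hDdef, hk, if_false]
      exact div_nonneg (ht0 n k) hkpos.le
  have hDsum : ∀ n, ∑ k, D n k ≤ 1 := by
    intro n
    have he : ∑ k, D n k = l n * S n := by
      rw [hSdef, Finset.mul_sum]
      apply Finset.sum_congr rfl
      intro k _
      by_cases hk : p k = 0
      · simp [hDdef, hk]
      · simp only [hDdef, htdef, hk, if_false]
        ring
    rw [he]
    exact hrow n
  have hDp : ∀ n, ∑ k, D n k * p k = l n := by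
    intro n
    have he : ∀ k, D n k * p k = t n k := by
      intro k
      by_cases hk : p k = 0
      · simp [hDdef, hk, htzero n k hk]
      · simp only [hDdef, hk, if_false]
        field_simp
    rw [Finset.sum_congr rfl (fun k _ => he k)]
    rw [htdef]
    rw [← Finset.mul_sum, hwnorm n, mul_one]
  have hjen : ∀ n, l n ^ α ≤ ∑ k, t n k * p k ^ (α - 1) := by
    intro n
    calc l n ^ α = (∑ k, D n k * p k) ^ α := by rw [hDp n]
      _ ≤ ∑ k, D n k * p k ^ α :=
          jensen_deficit hα p (D n) hp0 (hD0 n) (hDsum n)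
      _ = ∑ k, t n k * p k ^ (α - 1) := by
          apply Finset.sum_congr rfl
          intro k _
          by_cases hk : p k = 0
          · simp [hDdef, hk, htzero n k hk]
          · have hkpos : 0 < p k := lt_of_le_of_ne (hp0 k) (Ne.symm hk)
            simp only [hDdef, hk, if_false]
            rw [show α - 1 = α - (1:ℝ) from rfl, Real.rpow_sub hkpos, Real.rpow_one]
            field_simp
  have hsn : ∀ k, Summable fun n => t n k := fun k => (hcol k).summable
  have hRsum : Summable (fun n => ∑ k, t n k * p k ^ (α - 1)) :=
    summable_sum (fun k _ => (hsn k).mul_right _)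
  have hLsum : Summable (fun n => l n ^ α) :=
    Summable.of_nonneg_of_le (fun n => Real.rpow_nonneg (hl0 n) α) hjen hRsum
  have hswap : ∑' n, ∑ k, t n k * p k ^ (α - 1) = ∑ k, p k ^ α := by
    rw [Summable.tsum_finsetSum (fun k _ => (hsn k).mul_right _)]
    apply Finset.sum_congr rfl
    intro k _
    rw [tsum_mul_right, (hcol k).tsum_eq]
    by_cases hk : p k = 0
    · rw [hk, Real.zero_rpow (by linarith : α ≠ 0), zero_mul]
    · have hkpos : 0 < p k := lt_of_le_of_ne (hp0 k) (Ne.symm hk)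
      nth_rewrite 1 [← Real.rpow_one (p k)]
      rw [← Real.rpow_add hkpos]
      norm_num
  have hkey : ∑' n, l n ^ α ≤ ∑ k, p k ^ α := by
    rw [← hswap]
    exact Summable.tsum_le_tsum hjen hLsum hRsum
  have hlsummable : Summable l := by
    by_contra h
    rw [tsum_eq_zero_of_not_summable h] at hls
    norm_num at hls
  obtain ⟨n₀, hn₀⟩ : ∃ n, 0 < l n := by
    by_contra h
    push_neg at h
    have hz : ∀ n, l n = 0 := fun n => le_antisymm (h n) (hl0 n)
    have : (∑' n, l n) = 0 := by simp [hz]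
    rw [this] at hls
    norm_num at hls
  have hLpos : 0 < ∑' n, l n ^ α :=
    Summable.tsum_pos hLsum (fun n => Real.rpow_nonneg (hl0 n) α) n₀ (Real.rpow_pos_of_pos hn₀ α)
  have hlog : Real.log (∑' n, l n ^ α) ≤ Real.log (∑ k, p k ^ α) :=
    Real.log_le_log hLpos hkey
  have hc : (1 - α)⁻¹ ≤ 0 := inv_nonpos.mpr (by linarith)
  exact mul_le_mul_of_nonpos_left hlog hc
end

section
/- If ρ = ∑_k p_k E_k is the spectral decomposition of a density operator (p_k the eigenvalues in decreasing order with multiplicity, E_k rank-one projections) and ρ = ∑_k λ_k ρ_k is any other pure-state decomposition with weights arranged decreasingly, then the partial sums satisfy ∑_{k=1}^n p_k ≥ ∑_{k=1}^n λ_k for all n (the eigenvalue sequence majorizes the weight sequence). -/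
open scoped ComplexOrder

lemma rank_one_proj_structure {d : ℕ} (σ : Matrix (Fin d) (Fin d) ℂ)
    (hh : σ.IsHermitian) (hid : σ ^ 2 = σ) (hr : σ.rank = 1) :
    ∃ y : Fin d → ℂ, σ = Matrix.vecMulVec y (star y) ∧ dotProduct (star y) y = 1 := by
  classical
  set es := hh.eigenvalues with hes
  have heig : ∀ i, es i = 0 ∨ es i = 1 := by
    intro i
    have h1 := hh.mulVec_eigenvectorBasis i
    have h2 : Matrix.mulVec σ (Matrix.mulVec σ ⇑(hh.eigenvectorBasis i))
        = (es i * es i) • ⇑(hh.eigenvectorBasis i) := by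
      rw [h1, Matrix.mulVec_smul, h1, smul_smul]
    have h3 : Matrix.mulVec (σ * σ) ⇑(hh.eigenvectorBasis i)
        = Matrix.mulVec σ ⇑(hh.eigenvectorBasis i) := by
      rw [← pow_two, hid]
    rw [Matrix.mulVec_mulVec] at h2
    rw [h2, h1] at h3
    have h4 : (es i * es i - es i) • ⇑(hh.eigenvectorBasis i) = 0 := by
      rw [sub_smul, h3, sub_self]
    have h5 : ⇑(hh.eigenvectorBasis i) ≠ 0 := by
      intro h
      exact hh.eigenvectorBasis.orthonormal.ne_zero i (by ext j; exact congrFun h j)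
    rcases smul_eq_zero.mp h4 with h | h
    · have h6 : es i * (es i - 1) = 0 := by ring_nf; ring_nf at h; linarith
      rcases mul_eq_zero.mp h6 with h7 | h7
      · exact Or.inl h7
      · exact Or.inr (by linarith)
    · exact absurd h h5
  -- find the unique index with eigenvalue 1
  have hcard : Fintype.card {i // es i ≠ 0} = 1 := by
    rw [hes, ← hh.rank_eq_card_non_zero_eigs]; exact hr
  obtain ⟨a, ha⟩ := Fintype.card_eq_one_iff.mp hcard
  set i0 := a.1 with hi0
  have hes1 : es i0 = 1 := (heig i0).resolve_left a.2
  have hes0 : ∀ j, j ≠ i0 → es j = 0 := by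
    intro j hj
    by_contra h
    exact hj (congrArg Subtype.val (ha ⟨j, h⟩))
  set U : Matrix (Fin d) (Fin d) ℂ := (hh.eigenvectorUnitary : Matrix (Fin d) (Fin d) ℂ) with hU
  have hUU : star U * U = 1 := hh.eigenvectorUnitary.2.1
  refine ⟨fun r => U r i0, ?_, ?_⟩
  · have hspec := hh.spectral_theorem
    rw [hspec, Unitary.conjStarAlgAut_apply]
    ext r s
    rw [Matrix.mul_apply, Matrix.vecMulVec_apply]
    rw [Finset.sum_eq_single i0]
    · simp only [Matrix.mul_diagonal, Function.comp_apply, ← hes, hes1, Matrix.star_apply,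
        Pi.star_apply]
      push_cast
      ring
    · intro b _ hb
      simp only [Matrix.mul_diagonal, Function.comp_apply, ← hes, hes0 b hb]
      simp
    · intro h; exact absurd (Finset.mem_univ i0) h
  · have : dotProduct (star fun r => U r i0) (fun r => U r i0) = (star U * U) i0 i0 := by
      rw [Matrix.mul_apply, dotProduct]
      simp [Matrix.star_apply]
    rw [this, hUU, Matrix.one_apply_eq]

local notation "⟪" x ", " y "⟫" => @inner ℂ _ _ x y

lemma parseval_onb {F : Type*} [NormedAddCommGroup F] [InnerProductSpace ℂ F] {ι : Type*}
    [Fintype ι] (b : OrthonormalBasis ι ℂ F) (x : F) :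
    ∑ i, ‖⟪b i, x⟫‖ ^ 2 = ‖x‖ ^ 2 := by
  have h := b.sum_inner_mul_inner x x
  have h2 : ∀ i : ι, ⟪x, b i⟫ * ⟪b i, x⟫ = ((‖⟪b i, x⟫‖ ^ 2 : ℝ) : ℂ) := by
    intro i
    rw [← inner_conj_symm x (b i), RCLike.conj_mul]
    norm_cast
  rw [Finset.sum_congr rfl (fun i _ => h2 i)] at h
  rw [← Complex.ofReal_sum] at h
  rw [inner_self_eq_norm_sq_to_K] at h
  exact Complex.ofReal_injective (by push_cast at h ⊢; exact h)

lemma card_filter_lt {d n : ℕ} (hn : n ≤ d) :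
    (Finset.univ.filter (fun i : Fin d => (i : ℕ) < n)).card = n := by
  have : (Finset.univ.filter (fun i : Fin d => (i : ℕ) < n))
      = Finset.map (Fin.castLEEmb hn) Finset.univ := by
    ext i
    simp only [Finset.mem_filter, Finset.mem_univ, true_and, Finset.mem_map]
    constructor
    · intro h; refine ⟨⟨(i : ℕ), h⟩, ?_⟩; ext; simp
    · rintro ⟨j, rfl⟩; exact j.2
  rw [this, Finset.card_map, Finset.card_univ, Fintype.card_fin]

lemma scalar_maj {d n : ℕ} (hn : n < d) (lam t : Fin d → ℝ)
    (hdec : ∀ i j : Fin d, i ≤ j → lam j ≤ lam i) (hl0 : ∀ i, 0 ≤ lam i)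
    (ht0 : ∀ i, 0 ≤ t i) (ht1 : ∀ i, t i ≤ 1) (hts : ∑ i, t i ≤ (n : ℝ)) :
    ∑ i, lam i * t i ≤ ∑ i ∈ Finset.univ.filter (fun i : Fin d => (i : ℕ) < n), lam i := by
  classical
  set μ := lam ⟨n, hn⟩ with hμ
  have hμ0 : 0 ≤ μ := hl0 _
  have key : ∑ i, (lam i - μ) * t i
      ≤ ∑ i ∈ Finset.univ.filter (fun i : Fin d => (i : ℕ) < n), (lam i - μ) := by
    rw [← Finset.sum_filter_add_sum_filter_not Finset.univ (fun i : Fin d => (i : ℕ) < n)]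
    have h1 : ∑ i ∈ Finset.univ.filter (fun i : Fin d => (i : ℕ) < n), (lam i - μ) * t i
        ≤ ∑ i ∈ Finset.univ.filter (fun i : Fin d => (i : ℕ) < n), (lam i - μ) := by
      apply Finset.sum_le_sum
      intro i hi
      simp only [Finset.mem_filter] at hi
      have hle : μ ≤ lam i := hdec i ⟨n, hn⟩ (by simp [Fin.le_def]; omega)
      nlinarith [ht0 i, ht1 i]
    have h2 : ∑ i ∈ Finset.univ.filter (fun i : Fin d => ¬ (i : ℕ) < n), (lam i - μ) * t i ≤ 0 := by
      apply Finset.sum_nonpos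
      intro i hi
      simp only [Finset.mem_filter] at hi
      have hle : lam i ≤ μ := hdec ⟨n, hn⟩ i (by simp [Fin.le_def]; omega)
      nlinarith [ht0 i]
    linarith
  have hcard := card_filter_lt (le_of_lt hn)
  have hexp : ∑ i ∈ Finset.univ.filter (fun i : Fin d => (i : ℕ) < n), (lam i - μ)
      = (∑ i ∈ Finset.univ.filter (fun i : Fin d => (i : ℕ) < n), lam i) - n * μ := by
    rw [Finset.sum_sub_distrib, Finset.sum_const, hcard, nsmul_eq_mul]
  have hsum : ∑ i, lam i * t i = ∑ i, (lam i - μ) * t i + μ * ∑ i, t i := by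
    rw [Finset.mul_sum, ← Finset.sum_add_distrib]
    apply Finset.sum_congr rfl
    intro i _; ring
  have : μ * ∑ i, t i ≤ μ * n := mul_le_mul_of_nonneg_left hts hμ0
  rw [hsum]
  rw [hexp] at key
  linarith

lemma quad_vecMulVec {d : ℕ} (y v : Fin d → ℂ) :
    dotProduct (star v) ((Matrix.vecMulVec y (star y)).mulVec v)
      = star (dotProduct (star y) v) * (dotProduct (star y) v) := by
  simp only [dotProduct, Matrix.mulVec, Matrix.vecMulVec_apply, Pi.star_apply,
    star_sum, star_mul', star_star, Finset.mul_sum, Finset.sum_mul]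
  rw [Finset.sum_comm]
  apply Finset.sum_congr rfl
  intro s _
  apply Finset.sum_congr rfl
  intro r _
  ring

lemma herm_sum_outer {d : ℕ} (A : Matrix (Fin d) (Fin d) ℂ) (hA : A.IsHermitian) :
    A = ∑ i, hA.eigenvalues i •
      Matrix.vecMulVec (fun r => (hA.eigenvectorUnitary : Matrix (Fin d) (Fin d) ℂ) r i)
        (star fun r => (hA.eigenvectorUnitary : Matrix (Fin d) (Fin d) ℂ) r i) := by
  conv_lhs => rw [hA.spectral_theorem, Unitary.conjStarAlgAut_apply]
  ext r s
  rw [Matrix.mul_apply, Matrix.sum_apply]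
  apply Finset.sum_congr rfl
  intro c _
  simp only [Matrix.mul_diagonal, Function.comp_apply, Matrix.star_apply, Pi.star_apply,
    Matrix.smul_apply, Matrix.vecMulVec_apply]
  rw [Complex.real_smul]
  rw [mul_right_comm, mul_comm]
  norm_cast
lemma quad_sum {d : ℕ} {ι : Type*} (s : Finset ι) (M : ι → Matrix (Fin d) (Fin d) ℂ)
    (w : Fin d → ℂ) :
    dotProduct (star w) ((∑ i ∈ s, M i).mulVec w)
      = ∑ i ∈ s, dotProduct (star w) ((M i).mulVec w) := by
  classical
  induction s using Finset.induction with
  | empty => simp [Matrix.zero_mulVec, dotProduct_zero]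
  | insert _ _ h ih =>
      rw [Finset.sum_insert h, Finset.sum_insert h, Matrix.add_mulVec,
        dotProduct_add, ih]

/-- The eigenvalue sequence of a density operator (arranged in
decreasing order) majorizes the weight sequence of any pure-state decomposition
arranged in decreasing order: `∑_{k<n} l k ≤ ∑ (first n eigenvalues)` for all `n`. -/
theorem eigenvalues_majorize_decomposition_weights {d : ℕ}
    (ρ : Matrix (Fin d) (Fin d) ℂ) (hρ : ρ.IsHermitian) (hpsd : ρ.PosSemidef)
    (htr : ρ.trace = 1)
    (hpdec : ∀ i j : Fin d, i ≤ j → hρ.eigenvalues j ≤ hρ.eigenvalues i)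
    (l : ℕ → ℝ) (σ : ℕ → Matrix (Fin d) (Fin d) ℂ)
    (hl0 : ∀ n, 0 ≤ l n) (hla : Antitone l) (hls : ∑' n, l n = 1)
    (hσ : ∀ n, (σ n).IsHermitian ∧ (σ n) ^ 2 = σ n ∧ (σ n).rank = 1)
    (hdec : ∑' n, l n • σ n = ρ) :
    ∀ n : ℕ, ∑ k ∈ Finset.range n, l k
      ≤ ∑ i ∈ Finset.univ.filter (fun i : Fin d => (i : ℕ) < n), hρ.eigenvalues i := by
  intro n
  classical
  have hsuml : Summable l := by
    by_contra h
    rw [tsum_eq_zero_of_not_summable h] at hls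
    exact one_ne_zero hls.symm
  have heigsum : ∑ i, hρ.eigenvalues i = 1 := by
    have h1 : ρ.trace = ∑ i, (hρ.eigenvalues i : ℂ) := by
      conv_lhs => rw [hρ.spectral_theorem, Unitary.conjStarAlgAut_apply]
      rw [Matrix.trace_mul_cycle, hρ.eigenvectorUnitary.2.1, one_mul, Matrix.trace_diagonal]
      rfl
    rw [htr] at h1
    have h2 := h1.symm
    rw [← Complex.ofReal_sum] at h2
    exact_mod_cast h2
  have hEnonneg : ∀ i, 0 ≤ hρ.eigenvalues i := fun i => hpsd.eigenvalues_nonneg i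
  by_cases hnd : d ≤ n
  · have hfilter : Finset.univ.filter (fun i : Fin d => (i : ℕ) < n) = Finset.univ := by
      ext i
      simp only [Finset.mem_filter, Finset.mem_univ, true_and, iff_true]
      exact lt_of_lt_of_le i.2 hnd
    rw [hfilter, heigsum]
    calc ∑ k ∈ Finset.range n, l k ≤ ∑' k, l k :=
          hsuml.sum_le_tsum _ (fun k _ => hl0 k)
      _ = 1 := hls
  · push_neg at hnd
    choose Y hY1 hY2 using fun k => rank_one_proj_structure (σ k) (hσ k).1 (hσ k).2.1 (hσ k).2.2
    have hYip : ∀ k, dotProduct (star (Y k)) (Y k) = ((∑ r, ‖Y k r‖ ^ 2 : ℝ) : ℂ) := by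
      intro k
      rw [dotProduct, Complex.ofReal_sum]
      apply Finset.sum_congr rfl
      intro r _
      rw [Pi.star_apply]
      rw [show (star (Y k r)) = (starRingEnd ℂ) (Y k r) from rfl, RCLike.conj_mul]
      norm_cast
    have hYn2 : ∀ k, ∑ r, ‖Y k r‖ ^ 2 = 1 := by
      intro k
      have h := hY2 k
      rw [hYip k] at h
      exact_mod_cast h
    have hYentry : ∀ k r, ‖Y k r‖ ≤ 1 := by
      intro k r
      have h1 : ‖Y k r‖ ^ 2 ≤ 1 := by
        rw [← hYn2 k]
        exact Finset.single_le_sum (fun i _ => sq_nonneg (‖Y k i‖)) (Finset.mem_univ r)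
      nlinarith [norm_nonneg (Y k r)]
    have hsm : Summable (fun k => l k • σ k) := by
      have hent : ∀ r s : Fin d, Summable (fun k => (l k • σ k) r s) := by
        intro r s
        apply Summable.of_norm_bounded hsuml
        intro k
        rw [Matrix.smul_apply, norm_smul]
        have h2 : ‖σ k r s‖ ≤ 1 := by
          rw [hY1 k, Matrix.vecMulVec_apply, norm_mul, Pi.star_apply, norm_star]
          calc ‖Y k r‖ * ‖Y k s‖ ≤ 1 * 1 :=
                mul_le_mul (hYentry k r) (hYentry k s) (norm_nonneg _) zero_le_one
            _ = 1 := mul_one 1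
        calc ‖l k‖ * ‖σ k r s‖ ≤ ‖l k‖ * 1 :=
              mul_le_mul_of_nonneg_left h2 (norm_nonneg _)
          _ = |l k| := mul_one _
          _ = l k := abs_of_nonneg (hl0 k)
      exact Pi.summable.mpr fun r => Pi.summable.mpr fun s => hent r s
    have keyQ : ∀ w : Fin d → ℂ,
        Complex.re (dotProduct (star w) (ρ.mulVec w))
          = ∑' k, l k * ‖dotProduct (star (Y k)) w‖ ^ 2 := by
      intro w
      let L0 : Matrix (Fin d) (Fin d) ℂ →ₗ[ℝ] ℝ :=
        { toFun := fun A => Complex.re (dotProduct (star w) (A.mulVec w))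
          map_add' := by
            intro A B
            rw [Matrix.add_mulVec, dotProduct_add, Complex.add_re]
          map_smul' := by
            intro r A
            rw [Matrix.smul_mulVec, dotProduct_smul, RingHom.id_apply]
            simp [Complex.real_smul] }
      let L : Matrix (Fin d) (Fin d) ℂ →L[ℝ] ℝ := LinearMap.toContinuousLinearMap L0
      have hLσ : ∀ k, L (l k • σ k) = l k * ‖dotProduct (star (Y k)) w‖ ^ 2 := by
        intro k
        have h1 : L (l k • σ k) = l k * L (σ k) := by
          rw [map_smul]; rfl
        rw [h1]
        congr 1
        show Complex.re (dotProduct (star w) ((σ k).mulVec w)) = _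
        conv_lhs => rw [hY1 k]
        rw [quad_vecMulVec]
        rw [show (star (dotProduct (star (Y k)) w))
            = (starRingEnd ℂ) (dotProduct (star (Y k)) w) from rfl]
        rw [RCLike.conj_mul]
        exact_mod_cast rfl
      have h2 : L ρ = ∑' k, L (l k • σ k) := by
        rw [← hdec]
        exact L.map_tsum hsm
      have h3 : L ρ = Complex.re (dotProduct (star w) (ρ.mulVec w)) := rfl
      rw [← h3, h2]
      exact tsum_congr hLσ
    have hsumQ : ∀ w : Fin d → ℂ,
        Summable (fun k => l k * ‖dotProduct (star (Y k)) w‖ ^ 2) := by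
      intro w
      set C : ℝ := ∑ r, ‖w r‖ with hC
      have hC0 : 0 ≤ C := Finset.sum_nonneg fun r _ => norm_nonneg _
      have hdb : ∀ k, ‖dotProduct (star (Y k)) w‖ ≤ C := by
        intro k
        rw [dotProduct]
        refine le_trans (norm_sum_le _ _) ?_
        apply Finset.sum_le_sum
        intro r _
        rw [norm_mul, Pi.star_apply, norm_star]
        calc ‖Y k r‖ * ‖w r‖ ≤ 1 * ‖w r‖ :=
              mul_le_mul_of_nonneg_right (hYentry k r) (norm_nonneg _)
          _ = ‖w r‖ := one_mul _
      apply Summable.of_nonneg_of_le (fun k => mul_nonneg (hl0 k) (sq_nonneg _))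
        (fun k => ?_) (hsuml.mul_right (C ^ 2))
      have h4 : ‖dotProduct (star (Y k)) w‖ ^ 2 ≤ C ^ 2 := by
        nlinarith [norm_nonneg (dotProduct (star (Y k)) w), hdb k]
      exact mul_le_mul_of_nonneg_left h4 (hl0 k)
    -- geometry: subspace spanned by the top n decomposition vectors
    let toE : (Fin d → ℂ) → EuclideanSpace ℂ (Fin d) := fun z => WithLp.toLp 2 z
    have htoEv : ∀ z : EuclideanSpace ℂ (Fin d), toE z = z := fun _ => rfl
    have hipd : ∀ x y : Fin d → ℂ,
        (inner ℂ (toE x) (toE y) : ℂ) = dotProduct (star x) y := fun x y =>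
          (EuclideanSpace.inner_eq_star_dotProduct _ _).trans (dotProduct_comm _ _)
    set s : Finset (EuclideanSpace ℂ (Fin d)) :=
      (Finset.range n).image (fun k => toE (Y k)) with hs
    set W : Submodule ℂ (EuclideanSpace ℂ (Fin d)) :=
      Submodule.span ℂ (s : Set (EuclideanSpace ℂ (Fin d))) with hW
    have hmn : Module.finrank ℂ W ≤ n := by
      refine le_trans (finrank_span_finset_le_card s) ?_
      exact le_trans Finset.card_image_le (by simp)
    set b : OrthonormalBasis (Fin (Module.finrank ℂ W)) ℂ W := stdOrthonormalBasis ℂ W with hb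
    set v : Fin (Module.finrank ℂ W) → EuclideanSpace ℂ (Fin d) :=
      fun j => (b j : EuclideanSpace ℂ (Fin d)) with hv
    have hvon : Orthonormal ℂ v := by
      constructor
      · intro i
        exact b.orthonormal.1 i
      · intro i j hij
        exact b.orthonormal.2 hij
    have hYW : ∀ k, k < n → toE (Y k) ∈ W := by
      intro k hk
      apply Submodule.subset_span
      simp only [hs, Finset.coe_image, Set.mem_image, Finset.mem_coe, Finset.mem_range]
      exact ⟨k, hk, rfl⟩
    have hYnorm1 : ∀ k, ‖toE (Y k)‖ ^ 2 = 1 := by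
      intro k
      rw [← inner_self_eq_norm_sq (𝕜 := ℂ)]
      rw [hipd, hY2 k]
      simp
    have hPk : ∀ k, k < n →
        ∑ j, ‖(inner ℂ (toE (Y k)) (v j) : ℂ)‖ ^ 2 = 1 := by
      intro k hk
      have h1 := parseval_onb b ⟨toE (Y k), hYW k hk⟩
      have h2 : ‖(⟨toE (Y k), hYW k hk⟩ : W)‖ ^ 2 = 1 := hYnorm1 k
      rw [h2] at h1
      rw [← h1]
      apply Finset.sum_congr rfl
      intro j _
      rw [norm_inner_symm]
      rfl
    -- the quadratic form of ρ in terms of eigenvalues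
    have hQρ : ∀ w : EuclideanSpace ℂ (Fin d),
        Complex.re (dotProduct (star (w : Fin d → ℂ)) (ρ.mulVec w))
          = ∑ i, hρ.eigenvalues i * ‖(inner ℂ (hρ.eigenvectorBasis i) w : ℂ)‖ ^ 2 := by
      intro w
      conv_lhs => rw [herm_sum_outer ρ hρ]
      rw [quad_sum, Complex.re_sum]
      apply Finset.sum_congr rfl
      intro i _
      rw [Matrix.smul_mulVec, dotProduct_smul, quad_vecMulVec]
      rw [show (star (dotProduct
            (star fun r => (hρ.eigenvectorUnitary : Matrix (Fin d) (Fin d) ℂ) r i) w))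
          = (starRingEnd ℂ) (dotProduct
            (star fun r => (hρ.eigenvectorUnitary : Matrix (Fin d) (Fin d) ℂ) r i) w) from rfl]
      rw [RCLike.conj_mul]
      have hcol : (fun r => (hρ.eigenvectorUnitary : Matrix (Fin d) (Fin d) ℂ) r i)
          = ⇑(hρ.eigenvectorBasis i) := by
        funext r
        exact hρ.eigenvectorUnitary_apply r i
      rw [hcol, ← hipd]
      rw [show toE ⇑(hρ.eigenvectorBasis i) = hρ.eigenvectorBasis i from rfl]
      rw [htoEv]
      rw [Complex.real_smul]
      simp [Complex.mul_re, ← Complex.ofReal_pow]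
    -- the t coefficients
    set t : Fin d → ℝ := fun i =>
      ∑ j, ‖(inner ℂ (hρ.eigenvectorBasis i) (v j) : ℂ)‖ ^ 2 with htdef
    have ht0 : ∀ i, 0 ≤ t i := fun i => Finset.sum_nonneg fun j _ => sq_nonneg _
    have ht1 : ∀ i, t i ≤ 1 := by
      intro i
      have h1 : ∑ j, ‖(inner ℂ (v j) (hρ.eigenvectorBasis i) : ℂ)‖ ^ 2
          ≤ ‖hρ.eigenvectorBasis i‖ ^ 2 :=
        hvon.sum_inner_products_le _
      have h2 : ‖hρ.eigenvectorBasis i‖ = 1 :=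
        hρ.eigenvectorBasis.orthonormal.1 i
      rw [h2, one_pow] at h1
      calc t i = ∑ j, ‖(inner ℂ (v j) (hρ.eigenvectorBasis i) : ℂ)‖ ^ 2 :=
            Finset.sum_congr rfl fun j _ => by rw [norm_inner_symm]
        _ ≤ 1 := h1
    have hts : ∑ i, t i ≤ (n : ℝ) := by
      have h1 : ∀ j, ∑ i, ‖(inner ℂ (hρ.eigenvectorBasis i) (v j) : ℂ)‖ ^ 2 = 1 := by
        intro j
        have h := parseval_onb hρ.eigenvectorBasis (v j)
        rw [hvon.1 j, one_pow] at h
        exact h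
      rw [Finset.sum_comm]
      rw [Finset.sum_congr rfl fun j _ => h1 j]
      simp only [Finset.sum_const, Finset.card_univ, Fintype.card_fin, nsmul_eq_mul, mul_one]
      exact_mod_cast hmn
    -- per-column lower bound
    have hjlb : ∀ j, ∑ k ∈ Finset.range n,
        l k * ‖(inner ℂ (toE (Y k)) (v j) : ℂ)‖ ^ 2
        ≤ ∑ i, hρ.eigenvalues i * ‖(inner ℂ (hρ.eigenvectorBasis i) (v j) : ℂ)‖ ^ 2 := by
      intro j
      have hc : ∀ k : ℕ, ‖(inner ℂ (toE (Y k)) (v j) : ℂ)‖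
          = ‖dotProduct (star (Y k)) (v j)‖ := by
        intro k
        rw [show (inner ℂ (toE (Y k)) (v j) : ℂ)
            = dotProduct (star (Y k)) (v j) from by rw [← htoEv (v j), hipd]]
      calc ∑ k ∈ Finset.range n, l k * ‖(inner ℂ (toE (Y k)) (v j) : ℂ)‖ ^ 2
          = ∑ k ∈ Finset.range n, l k * ‖dotProduct (star (Y k)) (v j)‖ ^ 2 :=
            Finset.sum_congr rfl fun k _ => by rw [hc k]
        _ ≤ ∑' k, l k * ‖dotProduct (star (Y k)) (v j)‖ ^ 2 :=
            (hsumQ (v j)).sum_le_tsum _ (fun k _ => mul_nonneg (hl0 k) (sq_nonneg _))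
        _ = Complex.re (dotProduct (star ((v j) : Fin d → ℂ)) (ρ.mulVec (v j))) :=
            (keyQ (v j)).symm
        _ = _ := hQρ (v j)
    -- assemble
    calc ∑ k ∈ Finset.range n, l k
        = ∑ k ∈ Finset.range n,
            l k * (∑ j, ‖(inner ℂ (toE (Y k)) (v j) : ℂ)‖ ^ 2) := by
          apply Finset.sum_congr rfl
          intro k hk
          rw [hPk k (Finset.mem_range.mp hk), mul_one]
      _ = ∑ j, ∑ k ∈ Finset.range n,
            l k * ‖(inner ℂ (toE (Y k)) (v j) : ℂ)‖ ^ 2 := by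
          simp_rw [Finset.mul_sum]
          exact Finset.sum_comm
      _ ≤ ∑ j, ∑ i, hρ.eigenvalues i *
            ‖(inner ℂ (hρ.eigenvectorBasis i) (v j) : ℂ)‖ ^ 2 :=
          Finset.sum_le_sum fun j _ => hjlb j
      _ = ∑ i, hρ.eigenvalues i * t i := by
          rw [Finset.sum_comm]
          apply Finset.sum_congr rfl
          intro i _
          rw [Finset.mul_sum]
      _ ≤ _ := scalar_maj hnd hρ.eigenvalues t hpdec hEnonneg ht0 ht1 hts
end
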